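/- Let μ ∈ ℂ with μ ∉ {0, 1}, a = (μ+μ⁻¹)/2, b = i(μ⁻¹−μ)/2, regarded as quaternions in the real span of 1 and i. Let n ∈ ℍ with Re n = 0 and n² = −1, φ ∈ ℍ \ {0}, T = ½(n·φ·(a−1)·φ⁻¹ + φ·b·φ⁻¹), ρ̂ = φ·((1−a)/2)·φ⁻¹, T̂ = T·ρ̂⁻¹, and γ_∞ = (1 − conj(μ)⁻¹)/(1 − μ) ∈ ℂ. Define the real-linear bijection r_∞ : ℍ → ℍ by r_∞(φ·c + φ·j·d) = φ·γ_∞·c + φ·j·d for c, d ∈ ℂ. Then T̂·E = r_∞(E), where E = {ψ ∈ ℍ : n·ψ = ψ·i}; consequently {ψ ∈ ℍ : N̂·ψ = ψ·i} = r_∞(E) for N̂ = T⁻¹·n·T. (Pointwise form of Theorem 6.1: the μ-Darboux transform of a harmonic map coincides with its simple factor dressing.) -/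

import Mathlib

/- Pointwise form of Theorem 6.1: the μ-Darboux transform of a harmonic map
coincides with its simple factor dressing: T̂E = r_∞(E), hence the +i
eigenspace of N̂ = T⁻¹nT is r_∞(E). -/

noncomputable section
open Complex

local notation "ℍ" => Quaternion ℝ

/-- The quaternion unit i. -/
def qi : ℍ := ⟨0,1,0,0⟩

/-- The quaternion unit j. -/
def qj : ℍ := ⟨0,0,1,0⟩

/-- Embedding of ℂ into ℍ as the real span of 1 and i. -/
def cq (z : ℂ) : ℍ := ⟨z.re, z.im, 0, 0⟩

/-- a = (μ+μ⁻¹)/2. -/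
def aμ (μ : ℂ) : ℂ := (μ + μ⁻¹) / 2

/-- b = i(μ⁻¹−μ)/2. -/
def bμ (μ : ℂ) : ℂ := Complex.I * (μ⁻¹ - μ) / 2

/-- T = ½(n·φ·(a−1)·φ⁻¹ + φ·b·φ⁻¹). -/
def Tq (μ : ℂ) (n φ : ℍ) : ℍ :=
  (n * (φ * cq (aμ μ - 1) * φ⁻¹) + φ * cq (bμ μ) * φ⁻¹) / 2

/-- ρ̂ = φ·((1−a)/2)·φ⁻¹. -/
def ρhat (μ : ℂ) (φ : ℍ) : ℍ := φ * cq ((1 - aμ μ) / 2) * φ⁻¹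

/-- T̂ = T·ρ̂⁻¹. -/
def That (μ : ℂ) (n φ : ℍ) : ℍ := Tq μ n φ * (ρhat μ φ)⁻¹

/-- γ_∞ = (1 − μ̄⁻¹)/(1 − μ). -/
def γinf (μ : ℂ) : ℂ := (1 - (starRingEnd ℂ μ)⁻¹) / (1 - μ)

/- Put β = b/(1 - a) = i(μ + 1)/(μ - 1). Then T̂ = φβφ⁻¹ - n, so for ψ ∈ E we get
T̂ψ = φβφ⁻¹ψ - ψi; in the coordinates ψ = φ(c + jd) this is φ((β - i)c + j(β̄ - i)d),
which is r_∞(ψw) for w = β̄ - i because γ_∞ w = β - i. As E is stable under right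
multiplication by ℂ, T̂E = r_∞(E).
The +i eigenspace of T⁻¹nT is T⁻¹E, so it suffices that T T̂ commutes with n, since then
T T̂ E = E. With m = φ⁻¹nφ and A = (a - 1)/2, T T̂ is conjugate to -(m - β)A(m - β). For
z ∈ ℂ both mzm + z̄ and mz + zm lie in ℝ + ℝm, and A(1 + β²) = -1 is real, so this product
lies in ℝ + ℝm as well. -/

open ComplexConjugate

section Eigenset

variable {D : Type*} [GroupWithZero D]

def eigenset (n q : D) : Set D := {ψ | n * ψ = ψ * q}

variable {n q x : D}

lemma mul_mem_eigenset {ψ : D} (h : Commute x n) (hψ : ψ ∈ eigenset n q) :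
    x * ψ ∈ eigenset n q := by
  change n * (x * ψ) = x * ψ * q
  rw [← mul_assoc, ← h.eq, mul_assoc, hψ, mul_assoc]

lemma mul_right_mem_eigenset {ψ : D} (h : Commute x q) (hψ : ψ ∈ eigenset n q) :
    ψ * x ∈ eigenset n q := by
  change n * (ψ * x) = ψ * x * q
  rw [← mul_assoc, hψ, mul_assoc, ← h.eq, ← mul_assoc]

lemma image_mul_left_eigenset (hx : x ≠ 0) (h : Commute x n) :
    (x * ·) '' eigenset n q = eigenset n q := by
  refine subset_antisymm (Set.image_subset_iff.2 fun ψ hψ => mul_mem_eigenset h hψ)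
    fun ψ hψ => ⟨x⁻¹ * ψ, mul_mem_eigenset h.inv_left₀ hψ, mul_inv_cancel_left₀ hx ψ⟩

lemma image_mul_right_eigenset (hx : x ≠ 0) (h : Commute x q) :
    (· * x) '' eigenset n q = eigenset n q := by
  refine subset_antisymm (Set.image_subset_iff.2 fun ψ hψ => mul_right_mem_eigenset h hψ)
    fun ψ hψ => ⟨ψ * x⁻¹, mul_right_mem_eigenset h.inv_left₀ hψ, inv_mul_cancel_right₀ hx ψ⟩

lemma eigenset_inv_mul_mul (hx : x ≠ 0) :
    eigenset (x⁻¹ * n * x) q = (x⁻¹ * ·) '' eigenset n q := by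
  ext ψ
  constructor
  · intro hψ
    refine ⟨x * ψ, ?_, inv_mul_cancel_left₀ hx ψ⟩
    calc n * (x * ψ) = x * (x⁻¹ * n * x * ψ) := by simp only [mul_assoc, mul_inv_cancel_left₀ hx]
      _ = x * ψ * q := by rw [hψ, mul_assoc]
  · rintro ⟨χ, hχ, rfl⟩
    change x⁻¹ * n * x * (x⁻¹ * χ) = x⁻¹ * χ * q
    rw [mul_assoc, mul_assoc, mul_inv_cancel_left₀ hx, hχ, mul_assoc]

end Eigenset

section Conjugation

variable {D : Type*} [GroupWithZero D] {φ : D}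

lemma conj_mul_conj (hφ : φ ≠ 0) (x y : D) :
    φ * x * φ⁻¹ * (φ * y * φ⁻¹) = φ * (x * y) * φ⁻¹ := by
  simp only [mul_assoc, inv_mul_cancel_left₀ hφ]

lemma conj_inv_conj (hφ : φ ≠ 0) (x : D) : φ * (φ⁻¹ * x * φ) * φ⁻¹ = x := by
  simp only [mul_assoc, mul_inv_cancel_left₀ hφ, mul_inv_cancel₀ hφ, mul_one]

lemma conj_inj (hφ : φ ≠ 0) {x y : D} : φ * x * φ⁻¹ = φ * y * φ⁻¹ ↔ x = y :=
  ⟨fun h => mul_left_cancel₀ hφ (mul_right_cancel₀ (inv_ne_zero hφ) h), fun h => h ▸ rfl⟩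

lemma Commute.conj₀ (hφ : φ ≠ 0) {x y : D} (h : Commute x y) :
    Commute (φ * x * φ⁻¹) (φ * y * φ⁻¹) := by
  unfold Commute SemiconjBy
  rw [conj_mul_conj hφ, conj_mul_conj hφ, h.eq]

end Conjugation

lemma conj_sub {R : Type*} [Ring R] (a b x y : R) : a * x * b - a * y * b = a * (x - y) * b := by
  rw [mul_sub, sub_mul]

lemma conj_neg_one {D : Type*} [DivisionRing D] {φ : D} (hφ : φ ≠ 0) : φ * (-1) * φ⁻¹ = -1 := by
  rw [mul_neg_one, neg_mul, mul_inv_cancel₀ hφ]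

lemma re_mul_comm (x y : ℍ) : (x * y).re = (y * x).re := by
  simp only [Quaternion.re_mul]; ring

lemma re_conj {φ : ℍ} (hφ : φ ≠ 0) (x : ℍ) : (φ * x * φ⁻¹).re = x.re := by
  rw [re_mul_comm, ← mul_assoc, inv_mul_cancel₀ hφ, one_mul]

lemma cq_eq_coe (z : ℂ) : cq z = Quaternion.coeComplex z := rfl

lemma cq_mul (z w : ℂ) : cq (z * w) = cq z * cq w := map_mul Quaternion.ofComplex z w

lemma cq_sub (z w : ℂ) : cq (z - w) = cq z - cq w := map_sub Quaternion.ofComplex z w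

lemma cq_commute (z w : ℂ) : Commute (cq z) (cq w) := by
  rw [Commute, SemiconjBy, ← cq_mul, mul_comm, cq_mul]

lemma cq_eq_re_of_im_eq_zero {z : ℂ} (hz : z.im = 0) : cq z = (z.re : ℍ) := by
  ext <;> simp [cq, hz]

lemma cq_neg (z : ℂ) : cq (-z) = -cq z := map_neg Quaternion.ofComplex z

lemma cq_inv (z : ℂ) : cq z⁻¹ = (cq z)⁻¹ := map_inv₀ Quaternion.ofComplex z

lemma cq_neg_one : cq (-1) = -1 := by
  change Quaternion.ofComplex (-1) = -1
  rw [map_neg, map_one]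

lemma cq_injective : Function.Injective cq := Quaternion.ofComplex.toRingHom.injective

lemma cq_I : cq I = qi := by ext <;> simp [cq, qi]

lemma div_two_eq_smul (x : ℍ) : x / 2 = (2⁻¹ : ℝ) • x := by
  rw [Algebra.smul_def, map_inv₀, map_ofNat, div_eq_mul_inv,
    ← (Commute.ofNat_left 2 x).inv_left₀.eq]

lemma cq_div_two (z : ℂ) : cq (z / 2) = (2⁻¹ : ℝ) • cq z := by
  rw [div_eq_inv_mul, ← Complex.ofReal_ofNat, ← Complex.ofReal_inv, ← Complex.real_smul]
  exact map_smul Quaternion.ofComplex _ z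

@[simp] lemma qj_re : qj.re = 0 := rfl
@[simp] lemma qj_imI : qj.imI = 0 := rfl
@[simp] lemma qj_imJ : qj.imJ = 1 := rfl
@[simp] lemma qj_imK : qj.imK = 0 := rfl

lemma cq_mul_qj (z : ℂ) : cq z * qj = qj * cq (conj z) := by
  ext <;> simp [cq_eq_coe, Quaternion.re_mul, Quaternion.imI_mul, Quaternion.imJ_mul,
    Quaternion.imK_mul]

def qpair (c d : ℂ) : ℍ := cq c + qj * cq d

lemma exists_qpair_eq (q : ℍ) : ∃ c d : ℂ, qpair c d = q :=
  ⟨⟨q.re, q.imI⟩, ⟨q.imJ, -q.imK⟩, by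
    ext <;> simp [qpair, cq_eq_coe, Quaternion.re_mul, Quaternion.imI_mul, Quaternion.imJ_mul,
      Quaternion.imK_mul]⟩

lemma cq_mul_qpair (z c d : ℂ) : cq z * qpair c d = qpair (z * c) (conj z * d) := by
  rw [qpair, qpair, mul_add, ← mul_assoc, cq_mul_qj, mul_assoc, cq_mul, cq_mul]

lemma qpair_mul_cq (c d z : ℂ) : qpair c d * cq z = qpair (c * z) (d * z) := by
  simp only [qpair, add_mul, mul_assoc, cq_mul]

lemma qpair_sub (a b c d : ℂ) : qpair a b - qpair c d = qpair (a - c) (b - d) := by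
  simp only [qpair, cq_sub, mul_sub]; abel

lemma mul_qpair (φ : ℍ) (c d : ℂ) : φ * qpair c d = φ * cq c + φ * qj * cq d := by
  rw [qpair, mul_add, mul_assoc]

section ImaginaryUnit

variable {m : ℍ}

lemma imI_sq_add_imJ_sq_add_imK_sq_eq_one (hre : m.re = 0) (hsq : m * m = -1) :
    m.imI ^ 2 + m.imJ ^ 2 + m.imK ^ 2 = 1 := by
  have := congrArg QuaternionAlgebra.re hsq
  simp [Quaternion.re_mul, hre, Quaternion.re_one] at this
  linear_combination -this

lemma mul_cq_mul_add_cq_conj (hre : m.re = 0) (hsq : m * m = -1) (z : ℂ) :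
    m * cq z * m + cq (conj z) = (-2 * z.im * m.imI) • m := by
  have h := imI_sq_add_imJ_sq_add_imK_sq_eq_one hre hsq
  ext <;> simp [cq_eq_coe, Quaternion.re_mul, Quaternion.imI_mul, Quaternion.imJ_mul,
    Quaternion.imK_mul, hre]
  · linear_combination -z.re * h
  · linear_combination z.im * h
  · ring
  · ring

lemma mul_cq_add_cq_mul (hre : m.re = 0) (z : ℂ) :
    m * cq z + cq z * m = (2 * z.re) • m - ((2 * z.im * m.imI : ℝ) : ℍ) := by
  ext <;> simp [cq_eq_coe, Quaternion.re_mul, Quaternion.imI_mul, Quaternion.imJ_mul,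
    Quaternion.imK_mul, hre] <;> ring

lemma commute_sub_cq_mul_cq_mul_sub_cq (hre : m.re = 0) (hsq : m * m = -1) {A β : ℂ}
    (hA : (A * (1 + β ^ 2)).im = 0) : Commute m ((m - cq β) * cq A * (m - cq β)) := by
  have hreal : (A * β ^ 2 - conj A).im = 0 := by
    rw [mul_add, mul_one, Complex.add_im] at hA
    simp only [Complex.sub_im, Complex.conj_im]
    linear_combination hA
  have expand : (m - cq β) * cq A * (m - cq β) = (m * cq A * m + cq (conj A))
      - (m * cq (A * β) + cq (A * β) * m) + cq (A * β ^ 2 - conj A) := by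
    rw [sub_mul m, (cq_commute β A).eq]
    simp only [cq_mul, cq_sub, pow_two]
    noncomm_ring
  rw [expand, mul_cq_mul_add_cq_conj hre hsq, mul_cq_add_cq_mul hre,
    cq_eq_re_of_im_eq_zero hreal]
  have hm : Commute m m := Commute.refl m
  exact ((hm.smul_right _).sub_right ((hm.smul_right _).sub_right
    (Quaternion.coe_commute _ _).symm)).add_right (Quaternion.coe_commute _ _).symm

end ImaginaryUnit

def βμ (μ : ℂ) : ℂ := bμ μ / (1 - aμ μ)

section Scalars

variable {μ : ℂ}

lemma one_sub_aμ_eq (hμ0 : μ ≠ 0) : 1 - aμ μ = -(μ - 1) ^ 2 / (2 * μ) := by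
  rw [aμ]; field_simp; ring

lemma one_sub_aμ_ne_zero (hμ0 : μ ≠ 0) (hμ1 : μ ≠ 1) : 1 - aμ μ ≠ 0 := by
  rw [one_sub_aμ_eq hμ0]
  have : μ - 1 ≠ 0 := sub_ne_zero.2 hμ1
  field_simp
  simp [this, hμ0]

lemma βμ_eq (hμ0 : μ ≠ 0) (hμ1 : μ ≠ 1) : βμ μ = I * (μ + 1) / (μ - 1) := by
  have : μ - 1 ≠ 0 := sub_ne_zero.2 hμ1
  rw [βμ, one_sub_aμ_eq hμ0, bμ]
  field_simp
  ring

lemma βμ_mul_aμ_sub_one (hμ0 : μ ≠ 0) (hμ1 : μ ≠ 1) : βμ μ * (aμ μ - 1) = -bμ μ := by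
  have := one_sub_aμ_ne_zero hμ0 hμ1
  rw [βμ]; field_simp; ring

lemma aμ_sub_one_mul_one_add_βμ_sq (hμ0 : μ ≠ 0) (hμ1 : μ ≠ 1) :
    (aμ μ - 1) * (1 + βμ μ ^ 2) = -2 := by
  have : μ - 1 ≠ 0 := sub_ne_zero.2 hμ1
  rw [βμ_eq hμ0 hμ1, aμ]
  field_simp
  linear_combination (μ - 1) ^ 2 * (μ + 1) ^ 2 * I_sq

lemma conj_sub_one_ne_zero (hμ1 : μ ≠ 1) : conj μ - 1 ≠ 0 := by
  rw [sub_ne_zero, Ne, ← map_one (starRingEnd ℂ), (RingHom.injective _).eq_iff]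
  exact hμ1

lemma conj_βμ_sub_I_eq (hμ0 : μ ≠ 0) (hμ1 : μ ≠ 1) :
    conj (βμ μ) - I = -2 * I * conj μ / (conj μ - 1) := by
  have := conj_sub_one_ne_zero hμ1
  rw [βμ_eq hμ0 hμ1]
  simp only [map_div₀, map_mul, map_add, map_sub, conj_I, map_one]
  field_simp
  ring

lemma conj_βμ_sub_I_ne_zero (hμ0 : μ ≠ 0) (hμ1 : μ ≠ 1) : conj (βμ μ) - I ≠ 0 := by
  have := conj_sub_one_ne_zero hμ1
  rw [conj_βμ_sub_I_eq hμ0 hμ1]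
  simp [hμ0, this, I_ne_zero]

lemma γinf_mul_conj_βμ_sub_I (hμ0 : μ ≠ 0) (hμ1 : μ ≠ 1) :
    γinf μ * (conj (βμ μ) - I) = βμ μ - I := by
  have h1 : μ - 1 ≠ 0 := sub_ne_zero.2 hμ1
  have h2 : 1 - μ ≠ 0 := sub_ne_zero.2 (Ne.symm hμ1)
  have h3 := conj_sub_one_ne_zero hμ1
  have h4 : conj μ ≠ 0 := by simpa using hμ0
  rw [conj_βμ_sub_I_eq hμ0 hμ1, βμ_eq hμ0 hμ1, γinf]
  field_simp
  ring

end Scalars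

section Transforms

variable {μ : ℂ} {n φ : ℍ}

lemma ρhat_inv : (ρhat μ φ)⁻¹ = φ * cq ((1 - aμ μ) / 2)⁻¹ * φ⁻¹ := by
  rw [ρhat, mul_inv_rev, mul_inv_rev, inv_inv, cq_inv, mul_assoc]

lemma Tq_eq (hμ0 : μ ≠ 0) (hμ1 : μ ≠ 1) (hφ : φ ≠ 0) :
    Tq μ n φ = (n - φ * cq (βμ μ) * φ⁻¹) * (φ * cq ((aμ μ - 1) / 2) * φ⁻¹) := by
  rw [Tq, div_two_eq_smul, cq_div_two, mul_smul_comm, smul_mul_assoc, mul_smul_comm, sub_mul,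
    conj_mul_conj hφ, ← cq_mul, βμ_mul_aμ_sub_one hμ0 hμ1, cq_neg, mul_neg, neg_mul,
    sub_neg_eq_add]

lemma That_eq (hμ0 : μ ≠ 0) (hμ1 : μ ≠ 1) (hφ : φ ≠ 0) :
    That μ n φ = φ * cq (βμ μ) * φ⁻¹ - n := by
  have hA : (aμ μ - 1) / 2 * ((1 - aμ μ) / 2)⁻¹ = -1 := by
    have := one_sub_aμ_ne_zero hμ0 hμ1
    field_simp
    ring
  rw [That, Tq_eq hμ0 hμ1 hφ, ρhat_inv, mul_assoc, conj_mul_conj hφ, ← cq_mul, hA,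
    cq_neg_one, conj_neg_one hφ, mul_neg_one, neg_sub]

lemma sub_conj_βμ_ne_zero (hμ0 : μ ≠ 0) (hμ1 : μ ≠ 1) (hsq : n * n = -1) (hφ : φ ≠ 0) :
    n - φ * cq (βμ μ) * φ⁻¹ ≠ 0 := by
  rw [sub_ne_zero]
  rintro rfl
  rw [conj_mul_conj hφ, ← conj_neg_one hφ, conj_inj hφ, ← cq_mul, ← cq_neg_one] at hsq
  have h := aμ_sub_one_mul_one_add_βμ_sq hμ0 hμ1
  rw [sq, cq_injective hsq] at h
  norm_num at h

lemma Tq_ne_zero (hμ0 : μ ≠ 0) (hμ1 : μ ≠ 1) (hsq : n * n = -1) (hφ : φ ≠ 0) :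
    Tq μ n φ ≠ 0 := by
  have hA : (aμ μ - 1) / 2 ≠ 0 := by
    have := one_sub_aμ_ne_zero hμ0 hμ1
    exact div_ne_zero (by rwa [← neg_sub, neg_ne_zero]) two_ne_zero
  rw [Tq_eq hμ0 hμ1 hφ]
  exact mul_ne_zero (sub_conj_βμ_ne_zero hμ0 hμ1 hsq hφ)
    (mul_ne_zero (mul_ne_zero hφ ((map_ne_zero Quaternion.ofComplex).2 hA)) (inv_ne_zero hφ))

lemma That_ne_zero (hμ0 : μ ≠ 0) (hμ1 : μ ≠ 1) (hsq : n * n = -1) (hφ : φ ≠ 0) :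
    That μ n φ ≠ 0 := by
  rw [That_eq hμ0 hμ1 hφ, ← neg_sub, neg_ne_zero]
  exact sub_conj_βμ_ne_zero hμ0 hμ1 hsq hφ

lemma commute_Tq_mul_That (hμ0 : μ ≠ 0) (hμ1 : μ ≠ 1) (hre : n.re = 0) (hsq : n * n = -1)
    (hφ : φ ≠ 0) : Commute n (Tq μ n φ * That μ n φ) := by
  obtain ⟨m, rfl⟩ : ∃ m, n = φ * m * φ⁻¹ := ⟨_, (conj_inv_conj hφ n).symm⟩
  rw [re_conj hφ] at hre
  rw [conj_mul_conj hφ, ← conj_neg_one hφ, conj_inj hφ] at hsq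
  have hA : (-((aμ μ - 1) / 2) * (1 + βμ μ ^ 2)).im = 0 := by
    rw [neg_mul, div_mul_eq_mul_div, aμ_sub_one_mul_one_add_βμ_sq hμ0 hμ1]
    norm_num
  have key := (commute_sub_cq_mul_cq_mul_sub_cq hre hsq hA).conj₀ hφ
  rw [Tq_eq hμ0 hμ1 hφ, That_eq hμ0 hμ1 hφ, conj_sub, conj_sub, conj_mul_conj hφ,
    conj_mul_conj hφ, ← neg_sub m, mul_neg, ← neg_mul, ← mul_neg, ← cq_neg]
  exact key

lemma That_mul_eq_apply_mul_cq (hμ0 : μ ≠ 0) (hμ1 : μ ≠ 1) (hφ : φ ≠ 0) {r : ℍ → ℍ}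
    (hr : ∀ c d : ℂ, r (φ * cq c + φ * qj * cq d) = φ * cq (γinf μ) * cq c + φ * qj * cq d)
    {ψ : ℍ} (hψ : ψ ∈ eigenset n qi) :
    That μ n φ * ψ = r (ψ * cq (conj (βμ μ) - I)) := by
  obtain ⟨c, d, hcd⟩ := exists_qpair_eq (φ⁻¹ * ψ)
  have hψφ : ψ = φ * qpair c d := by rw [hcd, mul_inv_cancel_left₀ hφ]
  calc That μ n φ * ψ = φ * cq (βμ μ) * φ⁻¹ * ψ - ψ * qi := by
        rw [That_eq hμ0 hμ1 hφ, sub_mul, (hψ : n * ψ = ψ * qi)]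
    _ = φ * (cq (βμ μ) * qpair c d - qpair c d * cq I) := by
        rw [hψφ, cq_I, mul_sub]
        simp only [mul_assoc, inv_mul_cancel_left₀ hφ]
    _ = φ * qpair (γinf μ * (c * (conj (βμ μ) - I))) (d * (conj (βμ μ) - I)) := by
        rw [cq_mul_qpair, qpair_mul_cq, qpair_sub, ← mul_assoc, mul_comm (γinf μ),
          mul_assoc, γinf_mul_conj_βμ_sub_I hμ0 hμ1]
        congr 2 <;> ring
    _ = r (ψ * cq (conj (βμ μ) - I)) := by
        rw [hψφ, mul_assoc, qpair_mul_cq, mul_qpair φ (c * _), hr, mul_assoc φ (cq _), ← cq_mul,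
          ← mul_qpair]

lemma image_That_eigenset (hμ0 : μ ≠ 0) (hμ1 : μ ≠ 1) (hφ : φ ≠ 0) {r : ℍ → ℍ}
    (hr : ∀ c d : ℂ, r (φ * cq c + φ * qj * cq d) = φ * cq (γinf μ) * cq c + φ * qj * cq d) :
    (That μ n φ * ·) '' eigenset n qi = r '' eigenset n qi := by
  have hw : cq (conj (βμ μ) - I) ≠ 0 :=
    (map_ne_zero Quaternion.ofComplex).2 (conj_βμ_sub_I_ne_zero hμ0 hμ1)
  have hwi : Commute (cq (conj (βμ μ) - I)) qi := cq_I ▸ cq_commute _ _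
  calc (That μ n φ * ·) '' eigenset n qi
      = (r ∘ (· * cq (conj (βμ μ) - I))) '' eigenset n qi :=
        Set.image_congr fun ψ hψ => That_mul_eq_apply_mul_cq hμ0 hμ1 hφ hr hψ
    _ = r '' eigenset n qi := by rw [Set.image_comp, image_mul_right_eigenset hw hwi]

end Transforms

theorem stmt_13 (μ : ℂ) (hμ0 : μ ≠ 0) (hμ1 : μ ≠ 1)
    (n : ℍ) (hre : n.re = 0) (hsq : n * n = -1)
    (φ : ℍ) (hφ : φ ≠ 0)
    (r : ℍ → ℍ)
    (hr : ∀ c d : ℂ,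
      r (φ * cq c + φ * qj * cq d) = φ * cq (γinf μ) * cq c + φ * qj * cq d) :
    (fun ψ => That μ n φ * ψ) '' {ψ : ℍ | n * ψ = ψ * qi}
        = r '' {ψ : ℍ | n * ψ = ψ * qi}
    ∧ {ψ : ℍ | ((Tq μ n φ)⁻¹ * n * Tq μ n φ) * ψ = ψ * qi}
        = r '' {ψ : ℍ | n * ψ = ψ * qi} := by
  have hT := Tq_ne_zero hμ0 hμ1 hsq hφ
  have hTT : Tq μ n φ * That μ n φ ≠ 0 := mul_ne_zero hT (That_ne_zero hμ0 hμ1 hsq hφ)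
  have hE := image_That_eigenset (n := n) hμ0 hμ1 hφ hr
  refine ⟨hE, ?_⟩
  change eigenset ((Tq μ n φ)⁻¹ * n * Tq μ n φ) qi = _
  rw [eigenset_inv_mul_mul hT,
    ← image_mul_left_eigenset hTT (commute_Tq_mul_That hμ0 hμ1 hre hsq hφ).symm, Set.image_image]
  simp only [← mul_assoc, inv_mul_cancel₀ hT, one_mul]
  exact hE
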